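/- If p/q is the truncated Wallis product π_E in lowest terms (E even, E ≥ 12) and n is a positive integer with E > 10^n, then 10^n·p/q is not an integer. -/

import Mathlib

/-!
By Bertrand's postulate there is a prime `r` with `E/2 < r ≤ E`; as `E` is even and `E ≥ 12`,
`r` is odd, `r < E` and `r ≥ 7`. Then `r` is one of the odd factors of `D_E`, while every factor of
`N_E` is `2`, `E` or an even number below `E` (hence `2·k` with `k < r`), so `r ∤ N_E`. From
`p·D_E = q·N_E` we get `r ∣ q`. If `10^n·p/q` were an integer, `q ∣ 10^n` since `p/q` is in lowest
terms, so `r ∣ 10`, impossible for a prime `r ≥ 7`.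
-/

/-- Numerator `N_E = 2·E·(E-2)²···4²·2²` of the truncated Wallis product. -/
def wallisNum (E : ℕ) : ℕ := 2 * E * ∏ k ∈ Finset.Icc 1 (E / 2 - 1), (2 * k) ^ 2

/-- Denominator `D_E = (E-1)²(E-3)²···3²·1²` of the truncated Wallis product. -/
def wallisDen (E : ℕ) : ℕ := ∏ k ∈ Finset.Icc 1 (E / 2), (2 * k - 1) ^ 2

lemma wallisDen_pos (E : ℕ) : 0 < wallisDen E :=
  Finset.prod_pos fun k hk => by
    have : 1 ≤ k := (Finset.mem_Icc.mp hk).1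
    exact pow_pos (by omega) 2

lemma dvd_wallisDen_of_odd_of_lt {E r : ℕ} (hr : Odd r) (hrE : r < E) : r ∣ wallisDen E := by
  obtain ⟨j, rfl⟩ := hr
  have hmem : j + 1 ∈ Finset.Icc 1 (E / 2) := Finset.mem_Icc.mpr ⟨by omega, by omega⟩
  calc 2 * j + 1 ∣ (2 * (j + 1) - 1) ^ 2 := by
        rw [show 2 * (j + 1) - 1 = 2 * j + 1 by omega]
        exact dvd_pow_self _ two_ne_zero
    _ ∣ wallisDen E := Finset.dvd_prod_of_mem _ hmem

lemma not_dvd_wallisNum_of_lt_two_mul {E r : ℕ} (hr : r.Prime) (hr2 : r ≠ 2) (hEr : E < 2 * r)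
    (hrE : ¬ r ∣ E) : ¬ r ∣ wallisNum E := by
  have hr_two : ¬ r ∣ 2 := fun h => hr2 ((Nat.prime_dvd_prime_iff_eq hr Nat.prime_two).mp h)
  have hr_factor : ∀ k ∈ Finset.Icc 1 (E / 2 - 1), ¬ r ∣ (2 * k) ^ 2 := by
    intro k hk hdvd
    obtain ⟨hk1, hkE⟩ := Finset.mem_Icc.mp hk
    rcases hr.dvd_mul.mp (hr.dvd_of_dvd_pow hdvd) with h | h
    · exact hr_two h
    · exact absurd (Nat.le_of_dvd (by omega) h) (by omega)
  rw [wallisNum, hr.prime.dvd_mul, hr.prime.dvd_mul, Prime.dvd_finsetProd_iff hr.prime]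
  rintro ((h | h) | ⟨k, hk, h⟩)
  exacts [hr_two h, hrE h, hr_factor k hk h]

lemma exists_prime_dvd_wallisDen_not_dvd_wallisNum {E : ℕ} (hE : Even E) (hE4 : 4 ≤ E) :
    ∃ r, r.Prime ∧ E / 2 < r ∧ r ∣ wallisDen E ∧ ¬ r ∣ wallisNum E := by
  obtain ⟨r, hr, hEr, hrE⟩ := Nat.exists_prime_lt_and_le_two_mul (E / 2) (by omega)
  have hr2 : r ≠ 2 := by omega
  have hE2r : E < 2 * r := by omega
  have hr_odd : Odd r := hr.odd_of_ne_two hr2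
  have hr_not_dvd : ¬ r ∣ E := fun h =>
    have h2r : 2 * r ∣ E := (Nat.coprime_two_left.mpr hr_odd).mul_dvd_of_dvd_of_dvd hE.two_dvd h
    absurd (Nat.le_of_dvd (by omega) h2r) (by omega)
  have hrE_lt : r < E := by
    have := Nat.odd_iff.mp hr_odd
    have := hE.two_dvd
    omega
  exact ⟨r, hr, hEr, dvd_wallisDen_of_odd_of_lt hr_odd hrE_lt,
    not_dvd_wallisNum_of_lt_two_mul hr hr2 hE2r hr_not_dvd⟩

lemma dvd_of_coprime_of_mul_div_eq_intCast {a p q : ℕ} {m : ℤ} (hq : 0 < q)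
    (hcop : p.Coprime q) (h : (a * p : ℝ) / q = m) : q ∣ a := by
  rw [div_eq_iff (by positivity)] at h
  have hz : ((a * p : ℕ) : ℤ) = q * m := by rw [mul_comm (q : ℤ)]; exact_mod_cast h
  exact hcop.symm.dvd_of_dvd_mul_right (Int.natCast_dvd_natCast.mp ⟨m, hz⟩)

theorem wallis_trunc_times_ten_pow_not_int (E n p q : ℕ) (hE : Even E) (hE12 : 12 ≤ E)
    (hq : 0 < q) (hcop : Nat.Coprime p q)
    (hpq : (p : ℝ) / q = (wallisNum E : ℝ) / wallisDen E) :
    ¬ ∃ m : ℤ, (10 ^ n * p : ℝ) / q = m := by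
  rintro ⟨m, hm⟩
  obtain ⟨r, hr, hEr, hrD, hrN⟩ := exists_prime_dvd_wallisDen_not_dvd_wallisNum hE (by omega)
  have hcross : p * wallisDen E = q * wallisNum E := by
    rw [div_eq_div_iff (by positivity) (by exact_mod_cast (wallisDen_pos E).ne')] at hpq
    rw [mul_comm q]
    exact_mod_cast hpq
  have hrq : r ∣ q :=
    (hr.dvd_mul.mp (hcross ▸ dvd_mul_of_dvd_right hrD p)).resolve_right hrN
  have hq10 : q ∣ 10 ^ n := dvd_of_coprime_of_mul_div_eq_intCast hq hcop (by exact_mod_cast hm)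
  have hr10 : r ∣ 10 := hr.dvd_of_dvd_pow (hrq.trans hq10)
  have hr7 : 7 ≤ r := by omega
  have hr_le : r ≤ 10 := Nat.le_of_dvd (by norm_num) hr10
  interval_cases r <;> first | omega | norm_num at hr
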